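/- For the infinite word w = x₁ (x₂)³ (x₁)⁷ (x₂)¹⁵ (x₁)³¹ (x₂)⁶³ ⋯ (alternating blocks of lengths 2^k − 1), we have EL(π₁(x₁ (x₂)³ ⋯ (x₂)^{2^{2j}−1})) = −j for every j > 1 and EL(π₂(x₁ (x₂)³ ⋯ (x₁)^{2^{2j−1}−1})) = −j for every j > 0. -/

import Mathlib

/-- The alphabet `I = {0, +, -}`. -/
inductive I : Type
  | zero | plus | minus
deriving DecidableEq, Inhabited

/-- Value of a single letter. -/
def lv : I → ℤ
  | I.zero => 0
  | I.plus => 1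
  | I.minus => -1

/-- Energy level of a finite word. -/
def EL (v : List I) : ℤ := (v.map lv).sum

/-- The prefix `w(0) ⋯ w(n-1)` of an infinite word, of length `n`. -/
def prefixWord (w : ℕ → I) (n : ℕ) : List I := (List.range n).map w

/-- `w` is safe if every nonempty prefix has nonnegative energy level. -/
def Safe (w : ℕ → I) : Prop := ∀ n : ℕ, 0 ≤ EL (prefixWord w (n + 1))

/-- `w` has a safe suffix. -/
def HasSafeSuffix (w : ℕ → I) : Prop := ∃ n : ℕ, Safe (fun k => w (n + k))

/-- The word `x₁ = (+,0)(+,-)`. -/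
def x1 : List (I × I) := [(I.plus, I.zero), (I.plus, I.minus)]

/-- The word `x₂ = (0,+)(-,+)`. -/
def x2 : List (I × I) := [(I.zero, I.plus), (I.minus, I.plus)]

/-- The `k`-th building block word: `x₁` if `k` is odd, `x₂` if `k` is even. -/
def blockWord (k : ℕ) : List (I × I) := if k % 2 = 1 then x1 else x2

/-- The `k`-th block: `2^k - 1` copies of `blockWord k`. -/
def blk (k : ℕ) : List (I × I) := (List.replicate (2 ^ k - 1) (blockWord k)).flatten

/-- Concatenation of blocks `1, …, j`, i.e. `x₁ (x₂)³ (x₁)⁷ ⋯`. -/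
def P (j : ℕ) : List (I × I) := ((List.range j).map (fun i => blk (i + 1))).flatten

/-!
Inside a block every copy of `x₁` or `x₂` has the same energy in each component: on the first
component `x₁` contributes `2` and `x₂` contributes `-1`, on the second component the other way
round. A block of `2^k - 1` copies contributing `2` followed by a block of `2^(k+1) - 1` copies
contributing `-1` therefore has energy `2(2^k - 1) - (2^(k+1) - 1) = -1`. The prefixes in
question split into such consecutive pairs (after the lone first block `x₁` for the second
component, which itself has energy `-1`), so each pair lowers the energy by one.
-/

lemma EL_append (u v : List I) : EL (u ++ v) = EL u + EL v := by
  simp only [EL, List.map_append, List.sum_append]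

lemma EL_map_flatten_replicate {α : Type*} (f : α → I) (n : ℕ) (l : List α) :
    EL (((List.replicate n l).flatten).map f) = n * EL (l.map f) := by
  simp [EL, List.map_flatten, List.sum_flatten, List.map_replicate, List.sum_replicate]

lemma blockWord_two_mul_add_one (m : ℕ) : blockWord (2 * m + 1) = x1 := by
  simp [blockWord]

lemma blockWord_two_mul_add_two (m : ℕ) : blockWord (2 * m + 2) = x2 := by
  simp [blockWord]

lemma EL_map_blk (f : I × I → I) (k : ℕ) :
    EL ((blk k).map f) = (2 ^ k - 1) * EL ((blockWord k).map f) := by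
  rw [blk, EL_map_flatten_replicate, Nat.cast_sub Nat.one_le_two_pow]
  push_cast
  rfl

lemma P_add_two (n : ℕ) : P (n + 2) = P n ++ blk (n + 1) ++ blk (n + 2) := by
  simp [P, List.range_succ]

lemma EL_map_P_add_two {f : I × I → I} {n : ℕ}
    (hpos : EL ((blockWord (n + 1)).map f) = 2) (hneg : EL ((blockWord (n + 2)).map f) = -1) :
    EL ((P (n + 2)).map f) = EL ((P n).map f) - 1 := by
  rw [P_add_two, List.map_append, List.map_append, EL_append, EL_append, EL_map_blk, EL_map_blk,
    hpos, hneg, pow_succ 2 (n + 1)]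
  ring

lemma EL_map_fst_P_two_mul (j : ℕ) : EL ((P (2 * j)).map Prod.fst) = -(j : ℤ) := by
  induction j with
  | zero => rfl
  | succ j ih =>
    rw [show 2 * (j + 1) = 2 * j + 2 by ring, EL_map_P_add_two, ih]
    · push_cast; ring
    · rw [blockWord_two_mul_add_one]; rfl
    · rw [blockWord_two_mul_add_two]; rfl

lemma EL_map_snd_P_two_mul_add_one (j : ℕ) :
    EL ((P (2 * j + 1)).map Prod.snd) = -((j : ℤ) + 1) := by
  induction j with
  | zero => rfl
  | succ j ih =>
    rw [show 2 * (j + 1) + 1 = (2 * j + 1) + 2 by ring, EL_map_P_add_two, ih]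
    · push_cast; ring
    · rw [show 2 * j + 1 + 1 = 2 * j + 2 by ring, blockWord_two_mul_add_two]; rfl
    · rw [show 2 * j + 1 + 2 = 2 * (j + 1) + 1 by ring, blockWord_two_mul_add_one]; rfl

theorem energy_of_wss_prefixes :
    (∀ j : ℕ, 1 < j → EL ((P (2 * j)).map Prod.fst) = -(j : ℤ)) ∧
    (∀ j : ℕ, 0 < j → EL ((P (2 * j - 1)).map Prod.snd) = -(j : ℤ)) := by
  refine ⟨fun j _ => EL_map_fst_P_two_mul j, fun j hj => ?_⟩
  obtain ⟨m, rfl⟩ := Nat.exists_eq_add_of_lt hj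
  rw [show 2 * (0 + m + 1) - 1 = 2 * m + 1 by omega, EL_map_snd_P_two_mul_add_one]
  push_cast
  ring
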